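/- Along every solution of the semi-discrete ORFD system, the discrete energy is dissipative: for all t ≥ 0, (d/dt) E_h(t) = −k₁ |w¹_{N+1}(t)|² − k₂ |w²_{N+1}(t)|² ≤ 0. -/

import Mathlib

/-
Differentiating the energy and inserting the equations of motion, the integrand becomes a
combination of the discrete Leibniz expressions `U_{j+1/2} δ_x V_{j+1/2} + V_{j+1/2} δ_x U_{j+1/2}`,
each of which is `(U_{j+1} V_{j+1} − U_j V_j)/h`; here `α₁ = α − γ²β` is what makes the
`u¹ δ_x w¹` terms combine. The sum therefore telescopes to the power `w¹σ¹ + w²σ²` of the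
stresses `σ¹ = αu¹ − γβu²`, `σ² = βu² − γβu¹` at the ends of the grid. It vanishes at `j = 0`
since `w¹₀ = w²₀ = 0`, and the feedback laws turn it into `−k₁|w¹_{N+1}|² − k₂|w²_{N+1}|²` at
`j = N + 1`.
-/

noncomputable section

/-- Midpoint average `U_{j+1/2} = (U_j + U_{j+1})/2` of a grid function. -/
def gridMid (U : ℕ → ℝ) (j : ℕ) : ℝ := (U j + U (j + 1)) / 2

/-- Difference quotient `δ_x U_{j+1/2} = (U_{j+1} − U_j)/h` of a grid function. -/
def gridDx (h : ℝ) (U : ℕ → ℝ) (j : ℕ) : ℝ := (U (j + 1) - U j) / h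

/-- The discrete ORFD energy
`E_h = (h/2) Σ_{j=0}^N [ρ|w¹_{j+1/2}|² + μ|w²_{j+1/2}|² + β|γu¹_{j+1/2} − u²_{j+1/2}|² + α₁|u¹_{j+1/2}|²]`. -/
def discEnergy (ρ μ β γ α₁ h : ℝ) (N : ℕ) (u1 u2 w1 w2 : ℕ → ℝ) : ℝ :=
  h / 2 * ∑ j ∈ Finset.range (N + 1),
    (ρ * gridMid w1 j ^ 2 + μ * gridMid w2 j ^ 2
      + β * (γ * gridMid u1 j - gridMid u2 j) ^ 2 + α₁ * gridMid u1 j ^ 2)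

open Finset

theorem gridMid_mul_gridDx_add {h : ℝ} (hh : h ≠ 0) (U V : ℕ → ℝ) (j : ℕ) :
    h * (gridMid U j * gridDx h V j + gridMid V j * gridDx h U j)
      = U (j + 1) * V (j + 1) - U j * V j := by
  unfold gridMid gridDx
  field_simp
  ring

def orfdPower (α β γ : ℝ) (u1 u2 w1 w2 : ℕ → ℝ) (j : ℕ) : ℝ :=
  w1 j * (α * u1 j - γ * β * u2 j) + w2 j * (β * u2 j - γ * β * u1 j)

theorem hasDerivAt_discEnergy {ρ μ β γ α₁ h t : ℝ} {N : ℕ} {u1 u2 w1 w2 : ℝ → ℕ → ℝ}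
    {du1 du2 dw1 dw2 : ℕ → ℝ}
    (hu1 : ∀ j ≤ N, HasDerivAt (fun s => gridMid (u1 s) j) (du1 j) t)
    (hu2 : ∀ j ≤ N, HasDerivAt (fun s => gridMid (u2 s) j) (du2 j) t)
    (hw1 : ∀ j ≤ N, HasDerivAt (fun s => gridMid (w1 s) j) (dw1 j) t)
    (hw2 : ∀ j ≤ N, HasDerivAt (fun s => gridMid (w2 s) j) (dw2 j) t) :
    HasDerivAt (fun s => discEnergy ρ μ β γ α₁ h N (u1 s) (u2 s) (w1 s) (w2 s))
      (h * ∑ j ∈ range (N + 1),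
        (ρ * gridMid (w1 t) j * dw1 j + μ * gridMid (w2 t) j * dw2 j
          + β * (γ * gridMid (u1 t) j - gridMid (u2 t) j) * (γ * du1 j - du2 j)
          + α₁ * gridMid (u1 t) j * du1 j)) t := by
  have hterm : ∀ j ∈ range (N + 1), HasDerivAt
      (fun s => ρ * gridMid (w1 s) j ^ 2 + μ * gridMid (w2 s) j ^ 2
        + β * (γ * gridMid (u1 s) j - gridMid (u2 s) j) ^ 2 + α₁ * gridMid (u1 s) j ^ 2)
      (ρ * (2 * gridMid (w1 t) j ^ 1 * dw1 j) + μ * (2 * gridMid (w2 t) j ^ 1 * dw2 j)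
        + β * (2 * (γ * gridMid (u1 t) j - gridMid (u2 t) j) ^ 1 * (γ * du1 j - du2 j))
        + α₁ * (2 * gridMid (u1 t) j ^ 1 * du1 j)) t := by
    intro j hj
    have hjN : j ≤ N := Nat.lt_succ_iff.mp (mem_range.mp hj)
    exact (((((hw1 j hjN).pow 2).const_mul ρ).add (((hw2 j hjN).pow 2).const_mul μ)).add
      (((((hu1 j hjN).const_mul γ).sub (hu2 j hjN)).pow 2).const_mul β)).add
      (((hu1 j hjN).pow 2).const_mul α₁)
  refine ((HasDerivAt.fun_sum hterm).const_mul (h / 2)).congr_deriv ?_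
  rw [mul_sum, mul_sum]
  refine sum_congr rfl fun j _ => ?_
  ring

theorem mul_sum_orfdRate_eq {ρ μ α β γ h : ℝ} (hρ : ρ ≠ 0) (hμ : μ ≠ 0) (hh : h ≠ 0)
    (u1 u2 w1 w2 : ℕ → ℝ) (n : ℕ) :
    h * ∑ j ∈ range n,
        (ρ * gridMid w1 j * ((α * gridDx h u1 j - γ * β * gridDx h u2 j) / ρ)
          + μ * gridMid w2 j * ((β * gridDx h u2 j - γ * β * gridDx h u1 j) / μ)
          + β * (γ * gridMid u1 j - gridMid u2 j) * (γ * gridDx h w1 j - gridDx h w2 j)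
          + (α - γ ^ 2 * β) * gridMid u1 j * gridDx h w1 j)
      = orfdPower α β γ u1 u2 w1 w2 n - orfdPower α β γ u1 u2 w1 w2 0 := by
  rw [mul_sum, ← sum_range_sub]
  refine sum_congr rfl fun j _ => ?_
  have hρ_cancel : ρ * gridMid w1 j * ((α * gridDx h u1 j - γ * β * gridDx h u2 j) / ρ)
      = gridMid w1 j * (α * gridDx h u1 j - γ * β * gridDx h u2 j) := by field_simp
  have hμ_cancel : μ * gridMid w2 j * ((β * gridDx h u2 j - γ * β * gridDx h u1 j) / μ)
      = gridMid w2 j * (β * gridDx h u2 j - γ * β * gridDx h u1 j) := by field_simp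
  unfold orfdPower
  linear_combination h * hρ_cancel + h * hμ_cancel + α * gridMid_mul_gridDx_add hh w1 u1 j
    - γ * β * gridMid_mul_gridDx_add hh w1 u2 j
    + β * gridMid_mul_gridDx_add hh w2 u2 j
    - γ * β * gridMid_mul_gridDx_add hh w2 u1 j

theorem stmt_8_general (ρ μ α β γ α₁ k₁ k₂ : ℝ)
    (hρ : 0 < ρ) (hμ : 0 < μ)
    (hk₁ : 0 < k₁) (hk₂ : 0 < k₂)
    (hα₁def : α₁ = α - γ ^ 2 * β)
    (N : ℕ) (L h : ℝ) (hL : 0 < L) (hh : h = L / (N + 1))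
    (u1 u2 w1 w2 : ℝ → ℕ → ℝ)
    (hode1 : ∀ t ≥ (0 : ℝ), ∀ j ≤ N,
      HasDerivAt (fun s => gridMid (u1 s) j) (gridDx h (w1 t) j) t)
    (hode2 : ∀ t ≥ (0 : ℝ), ∀ j ≤ N,
      HasDerivAt (fun s => gridMid (u2 s) j) (gridDx h (w2 t) j) t)
    (hode3 : ∀ t ≥ (0 : ℝ), ∀ j ≤ N,
      HasDerivAt (fun s => gridMid (w1 s) j)
        ((α * gridDx h (u1 t) j - γ * β * gridDx h (u2 t) j) / ρ) t)
    (hode4 : ∀ t ≥ (0 : ℝ), ∀ j ≤ N,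
      HasDerivAt (fun s => gridMid (w2 s) j)
        ((β * gridDx h (u2 t) j - γ * β * gridDx h (u1 t) j) / μ) t)
    (hbc0 : ∀ t ≥ (0 : ℝ), w1 t 0 = 0 ∧ w2 t 0 = 0)
    (hbcL1 : ∀ t ≥ (0 : ℝ),
      α * u1 t (N + 1) - γ * β * u2 t (N + 1) = -(k₁ * w1 t (N + 1)))
    (hbcL2 : ∀ t ≥ (0 : ℝ),
      β * u2 t (N + 1) - γ * β * u1 t (N + 1) = -(k₂ * w2 t (N + 1))) :
    ∀ t ≥ (0 : ℝ),
      HasDerivAt (fun s => discEnergy ρ μ β γ α₁ h N (u1 s) (u2 s) (w1 s) (w2 s))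
        (-(k₁ * (w1 t (N + 1)) ^ 2) - k₂ * (w2 t (N + 1)) ^ 2) t
      ∧ -(k₁ * (w1 t (N + 1)) ^ 2) - k₂ * (w2 t (N + 1)) ^ 2 ≤ 0 := by
  intro t ht
  subst hα₁def
  have hh₀ : h ≠ 0 := by rw [hh]; positivity
  have hE := hasDerivAt_discEnergy (ρ := ρ) (μ := μ) (β := β) (γ := γ) (α₁ := α - γ ^ 2 * β) (h := h)
    (hode1 t ht) (hode2 t ht) (hode3 t ht) (hode4 t ht)
  rw [mul_sum_orfdRate_eq hρ.ne' hμ.ne' hh₀] at hE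
  obtain ⟨hw1, hw2⟩ := hbc0 t ht
  have hpower : orfdPower α β γ (u1 t) (u2 t) (w1 t) (w2 t) (N + 1)
      - orfdPower α β γ (u1 t) (u2 t) (w1 t) (w2 t) 0
      = -(k₁ * (w1 t (N + 1)) ^ 2) - k₂ * (w2 t (N + 1)) ^ 2 := by
    simp only [orfdPower, hw1, hw2, hbcL1 t ht, hbcL2 t ht]
    ring
  refine ⟨hpower ▸ hE, ?_⟩
  nlinarith [mul_nonneg hk₁.le (sq_nonneg (w1 t (N + 1))),
    mul_nonneg hk₂.le (sq_nonneg (w2 t (N + 1)))]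

/-- Along every solution of the semi-discrete ORFD system, the discrete
energy is dissipative: `(d/dt)E_h(t) = −k₁|w¹_{N+1}(t)|² − k₂|w²_{N+1}(t)|² ≤ 0`. -/
theorem stmt_8 (ρ μ α β γ α₁ k₁ k₂ : ℝ)
    (hρ : 0 < ρ) (hμ : 0 < μ) (hα : 0 < α) (hβ : 0 < β) (hγ : 0 < γ)
    (hk₁ : 0 < k₁) (hk₂ : 0 < k₂)
    (hα₁def : α₁ = α - γ ^ 2 * β) (hα₁ : 0 < α₁)
    (N : ℕ) (L h : ℝ) (hL : 0 < L) (hh : h = L / (N + 1))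
    (u1 u2 w1 w2 : ℝ → ℕ → ℝ)
    (hode1 : ∀ t ≥ (0 : ℝ), ∀ j ≤ N,
      HasDerivAt (fun s => gridMid (u1 s) j) (gridDx h (w1 t) j) t)
    (hode2 : ∀ t ≥ (0 : ℝ), ∀ j ≤ N,
      HasDerivAt (fun s => gridMid (u2 s) j) (gridDx h (w2 t) j) t)
    (hode3 : ∀ t ≥ (0 : ℝ), ∀ j ≤ N,
      HasDerivAt (fun s => gridMid (w1 s) j)
        ((α * gridDx h (u1 t) j - γ * β * gridDx h (u2 t) j) / ρ) t)
    (hode4 : ∀ t ≥ (0 : ℝ), ∀ j ≤ N,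
      HasDerivAt (fun s => gridMid (w2 s) j)
        ((β * gridDx h (u2 t) j - γ * β * gridDx h (u1 t) j) / μ) t)
    (hbc0 : ∀ t ≥ (0 : ℝ), w1 t 0 = 0 ∧ w2 t 0 = 0)
    (hbcL1 : ∀ t ≥ (0 : ℝ),
      α * u1 t (N + 1) - γ * β * u2 t (N + 1) = -(k₁ * w1 t (N + 1)))
    (hbcL2 : ∀ t ≥ (0 : ℝ),
      β * u2 t (N + 1) - γ * β * u1 t (N + 1) = -(k₂ * w2 t (N + 1))) :
    ∀ t ≥ (0 : ℝ),
      HasDerivAt (fun s => discEnergy ρ μ β γ α₁ h N (u1 s) (u2 s) (w1 s) (w2 s))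
        (-(k₁ * (w1 t (N + 1)) ^ 2) - k₂ * (w2 t (N + 1)) ^ 2) t
      ∧ -(k₁ * (w1 t (N + 1)) ^ 2) - k₂ * (w2 t (N + 1)) ^ 2 ≤ 0 :=
  stmt_8_general ρ μ α β γ α₁ k₁ k₂ hρ hμ hk₁ hk₂ hα₁def N L h hL hh u1 u2 w1 w2 hode1 hode2 hode3
    hode4 hbc0 hbcL1 hbcL2

end
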